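/- arXiv:2605.08968 — 2 statements merged into one kernel-verified Lean document; each statement's English description precedes it below -/
import Mathlib

section
/- Let M_{t_n}(X,Y) = ∑_{a ≤ b in P_{t_n}} μ(a,b) X^{ht(a)} Y^{ht(b)} ∈ ℤ[X,Y]. Then in the ring of formal power series in s over ℤ[X,Y] one has the identity (1 + ∑_{n ≥ 1} M_{t_n}(X,Y) s^n) · (2XYs - Ys - 1) · (XYs - Ys + s - 1) = (XYs - Ys - 1) · (XYs - 1). -/
open MvPolynomial

/-- The poset `P_{t_n}`: lattice points `a ∈ ℕ^n` with `a i ≤ 1` for the first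
`n - 1` coordinates and total coordinate sum at most `n`, ordered coordinatewise. -/
def Ptn (n : ℕ) : Set (Fin n → ℕ) :=
  {a | (∀ i : Fin n, (i : ℕ) < n - 1 → a i ≤ 1) ∧ ∑ i, a i ≤ n}

/-- The variable `X` of `ℤ[X,Y]` (realized as `MvPolynomial (Fin 2) ℤ`). -/
noncomputable def Xv : MvPolynomial (Fin 2) ℤ := MvPolynomial.X 0

/-- The variable `Y` of `ℤ[X,Y]`. -/
noncomputable def Yv : MvPolynomial (Fin 2) ℤ := MvPolynomial.X 1

/-- `X` viewed as a constant power series in `s` over `ℤ[X,Y]`. -/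
noncomputable def CX : PowerSeries (MvPolynomial (Fin 2) ℤ) :=
  PowerSeries.C Xv

/-- `Y` viewed as a constant power series in `s` over `ℤ[X,Y]`. -/
noncomputable def CY : PowerSeries (MvPolynomial (Fin 2) ℤ) :=
  PowerSeries.C Yv

/-- The power series variable `s`. -/
noncomputable def S : PowerSeries (MvPolynomial (Fin 2) ℤ) := PowerSeries.X

/-!
Since `P_{t_n}` is a lower set of `ℕⁿ`, each interval `[a, b]` in it is the box
`∏ [aᵢ, bᵢ]`, so `μ(a, b) = ∏ μ_ℕ(aᵢ, bᵢ)`, where `μ_ℕ(d, m)` is `1`, `-1`, `0` according as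
`m - d` is `0`, `1` or larger. Summing over `a` first,
`M_{t_n} = ∑_b ∏ᵢ w(bᵢ)` with `w(0) = 1` and `w(m) = (XY - Y)(XY)^(m-1)` for `m ≥ 1`.
The first `n - 1` coordinates of `b` lie in `{0, 1}`; summing the last one telescopes to
`(XY - 1) M_{t_{n+1}} = (Y - 1)(XY - Y + 1)ⁿ + (XY - Y)XY(2XY - Y)ⁿ`, and the identity follows
from two geometric series after cancelling the nonzero constant `XY - 1`.
-/

open Finset

def natMoebius (x y : ℕ) : ℤ := if y = x then 1 else if y = x + 1 then -1 else 0

lemma sum_Icc_natMoebius {x y : ℕ} (h : x ≤ y) :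
    ∑ d ∈ Icc x y, natMoebius x d = if x = y then 1 else 0 := by
  induction y, h using Nat.le_induction with
  | base => simp [natMoebius]
  | succ y hxy ih =>
    rw [sum_Icc_succ_top (by omega), ih]
    rcases hxy.eq_or_lt with rfl | hlt
    · simp [natMoebius]
    · rw [if_neg hlt.ne, if_neg (by omega), natMoebius, if_neg (by omega), if_neg (by omega),
        add_zero]

section Moebius

variable {ι : Type*} [Fintype ι] [DecidableEq ι]

lemma sum_Icc_prod_natMoebius {a b : ι → ℕ} (hab : a ≤ b) :
    ∑ e ∈ Icc a b, ∏ i, natMoebius (a i) (e i) = if a = b then 1 else 0 := by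
  rw [Pi.Icc_eq, ← prod_univ_sum]
  simp only [sum_Icc_natMoebius (hab _), prod_boole, mem_univ, true_imp_iff, funext_iff]

theorem eq_prod_natMoebius_of_isLowerSet {P : Set (ι → ℕ)} (hP : IsLowerSet P)
    {mu : (ι → ℕ) → (ι → ℕ) → ℤ} (hrefl : ∀ a ∈ P, mu a a = 1)
    (hrec : ∀ a ∈ P, ∀ b ∈ P, a < b →
      mu a b = -∑ᶠ e ∈ {e | e ∈ P ∧ a ≤ e ∧ e < b}, mu a e)
    {a b : ι → ℕ} (hb : b ∈ P) (hab : a ≤ b) : mu a b = ∏ i, natMoebius (a i) (b i) := by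
  induction b using WellFoundedLT.induction with
  | ind b ih =>
  have ha : a ∈ P := hP hab hb
  rcases hab.eq_or_lt with rfl | hlt
  · simp [hrefl a ha, natMoebius]
  have hIco : {e | e ∈ P ∧ a ≤ e ∧ e < b} = ↑(Ico a b) := by
    ext e
    simp only [Set.mem_ofPred_eq, coe_Ico, Set.mem_Ico]
    exact ⟨fun h => h.2, fun h => ⟨hP h.2.le hb, h⟩⟩
  have hsum := sum_Icc_prod_natMoebius hab
  rw [if_neg hlt.ne, ← sum_Ico_add_eq_sum_Icc hab] at hsum
  rw [hrec a ha b hb hlt, hIco, finsum_mem_coe_finset,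
    sum_congr rfl fun e he => ih e (mem_Ico.1 he).2 (hP (mem_Ico.1 he).2.le hb) (mem_Ico.1 he).1]
  linear_combination -hsum

end Moebius

section Weight

variable {R : Type*} [CommRing R] (x y : R)

def natMoebiusWeight (m : ℕ) : R := ∑ d ∈ Iic m, (natMoebius d m : R) * x ^ d * y ^ m

@[simp] lemma natMoebiusWeight_zero : natMoebiusWeight x y 0 = 1 := by
  simp [natMoebiusWeight, natMoebius]

lemma natMoebiusWeight_succ (m : ℕ) :
    natMoebiusWeight x y (m + 1) = (x * y - y) * (x * y) ^ m := by
  rw [natMoebiusWeight, sum_eq_add (m + 1) m (by omega)]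
  · simp only [natMoebius, ↓reduceIte, Nat.add_eq_left, one_ne_zero, Int.cast_one,
      Int.cast_neg, one_mul, neg_mul]
    ring
  · intro d _ hd
    simp [natMoebius, hd.1.symm, hd.2.symm]
  all_goals simp

lemma natMoebiusWeight_of_le_one {m : ℕ} (hm : m ≤ 1) :
    natMoebiusWeight x y m = (x * y - y) ^ m := by
  interval_cases m <;> simp [natMoebiusWeight_succ]

lemma mul_sum_range_natMoebiusWeight (N : ℕ) :
    (x * y - 1) * ∑ m ∈ range (N + 1), natMoebiusWeight x y m =
      (y - 1) + (x * y - y) * (x * y) ^ N := by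
  induction N with
  | zero => simp
  | succ N ih =>
    rw [sum_range_succ, mul_add, ih, natMoebiusWeight_succ]
    ring

variable {ι : Type*} [Fintype ι] [DecidableEq ι]

lemma sum_Iic_prod_natMoebius_mul_pow (b : ι → ℕ) :
    ∑ a ∈ Iic b,
        ((∏ i, natMoebius (a i) (b i) : ℤ) : R) * (x ^ (∑ i, a i) * y ^ (∑ i, b i)) =
      ∏ i, natMoebiusWeight x y (b i) := by
  have hIic : Iic b = Fintype.piFinset fun i => Iic (b i) := by
    ext a
    simp [Pi.le_def]
  simp only [natMoebiusWeight, prod_univ_sum, ← hIic, Int.cast_prod, prod_mul_distrib,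
    prod_pow_eq_pow_sum, mul_assoc]

theorem finsum_mu_mul_pow_eq_finsum_prod_natMoebiusWeight {P : Set (ι → ℕ)}
    (hP : IsLowerSet P) (hfin : P.Finite) {mu : (ι → ℕ) → (ι → ℕ) → ℤ}
    (hrefl : ∀ a ∈ P, mu a a = 1)
    (hrec : ∀ a ∈ P, ∀ b ∈ P, a < b →
      mu a b = -∑ᶠ e ∈ {e | e ∈ P ∧ a ≤ e ∧ e < b}, mu a e) :
    ∑ᶠ a ∈ P, ∑ᶠ b ∈ {b | b ∈ P ∧ a ≤ b},
        (mu a b : R) * (x ^ (∑ i, a i) * y ^ (∑ i, b i)) =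
      ∑ᶠ b ∈ P, ∏ i, natMoebiusWeight x y (b i) := by
  classical
  have hupper (a : ι → ℕ) : {b | b ∈ P ∧ a ≤ b} = ↑(hfin.toFinset.filter (a ≤ ·)) := by
    ext b
    simp
  simp only [hupper, finsum_mem_coe_finset, finsum_mem_eq_finite_toFinset_sum _ hfin]
  rw [sum_comm' (t' := hfin.toFinset) (s' := Iic)]
  · refine sum_congr rfl fun b hb => ?_
    rw [← sum_Iic_prod_natMoebius_mul_pow]
    refine sum_congr rfl fun a ha => ?_
    rw [eq_prod_natMoebius_of_isLowerSet hP hrefl hrec (hfin.mem_toFinset.1 hb) (mem_Iic.1 ha)]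
  · intro a b
    simp only [Set.Finite.mem_toFinset, mem_filter, mem_Iic]
    exact ⟨fun h => ⟨h.2.2, h.2.1⟩, fun h => ⟨hP h.1 h.2, h.2, h.1⟩⟩

end Weight

lemma sum_le_of_mem_piFinset_range_two {n : ℕ} {p : Fin n → ℕ} (hp : p ∈ Fintype.piFinset fun _ => range 2) :
    ∑ i, p i ≤ n := by
  simp only [Fintype.mem_piFinset, mem_range] at hp
  simpa using sum_le_sum fun i (_ : i ∈ univ) => Nat.le_of_lt_succ (hp i)

lemma sum_piFinset_range_two_pow_mul_pow {R : Type*} [CommSemiring R] (a b : R) (n : ℕ) :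
    ∑ p ∈ Fintype.piFinset (fun _ : Fin n => range 2), a ^ (∑ i, p i) * b ^ (n - ∑ i, p i) =
      (a + b) ^ n := by
  have hterm : ∀ p ∈ Fintype.piFinset (fun _ : Fin n => range 2),
      a ^ (∑ i, p i) * b ^ (n - ∑ i, p i) = ∏ i, a ^ p i * b ^ (1 - p i) := by
    intro p hp
    simp only [Fintype.mem_piFinset, mem_range] at hp
    rw [prod_mul_distrib, prod_pow_eq_pow_sum, prod_pow_eq_pow_sum,
      sum_tsub_distrib _ fun i _ => Nat.le_of_lt_succ (hp i)]
    simp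
  rw [sum_congr rfl hterm, ← prod_univ_sum (fun _ => range 2) fun _ d => a ^ d * b ^ (1 - d)]
  simp [sum_range_succ, add_comm]

section Ptn

lemma isLowerSet_Ptn (n : ℕ) : IsLowerSet (Ptn n) := fun _ _ hba ha =>
  ⟨fun i hi => (hba i).trans (ha.1 i hi), (sum_le_sum fun i _ => hba i).trans ha.2⟩

lemma finite_Ptn (n : ℕ) : (Ptn n).Finite :=
  (Set.finite_Iic fun _ => n).subset fun _ ha i =>
    (single_le_sum (fun _ _ => Nat.zero_le _) (mem_univ i)).trans ha.2

lemma mem_Ptn_succ_iff {n : ℕ} {b : Fin (n + 1) → ℕ} :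
    b ∈ Ptn (n + 1) ↔
      (∀ i : Fin n, b i.castSucc ≤ 1) ∧ ∑ i : Fin n, b i.castSucc + b (Fin.last n) ≤ n + 1 := by
  simp [Ptn, Fin.forall_fin_succ', Fin.sum_univ_castSucc]

lemma finsum_Ptn_succ_prod {R : Type*} [CommSemiring R] (g : ℕ → R) (n : ℕ) :
    ∑ᶠ b ∈ Ptn (n + 1), ∏ i, g (b i) =
      ∑ p ∈ Fintype.piFinset (fun _ : Fin n => range 2),
        (∏ i, g (p i)) * ∑ m ∈ range (n + 1 - ∑ i, p i + 1), g m := by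
  simp only [finsum_mem_eq_finite_toFinset_sum _ (finite_Ptn _), mul_sum]
  rw [sum_sigma']
  refine sum_bij' (fun b _ => ⟨Fin.init b, b (Fin.last n)⟩) (fun q _ => Fin.snoc q.1 q.2)
    ?_ ?_ ?_ ?_ ?_
  · intro b hb
    obtain ⟨hle, hsum⟩ := mem_Ptn_succ_iff.1 ((finite_Ptn _).mem_toFinset.1 hb)
    simp only [mem_sigma, Fintype.mem_piFinset, mem_range, Fin.init]
    exact ⟨fun i => Nat.lt_succ_of_le (hle i), by omega⟩
  · rintro ⟨p, m⟩ hq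
    simp only [mem_sigma] at hq
    obtain ⟨hp, hm⟩ := hq
    have hle := sum_le_of_mem_piFinset_range_two hp
    simp only [Fintype.mem_piFinset, mem_range] at hp hm
    rw [Set.Finite.mem_toFinset, mem_Ptn_succ_iff]
    simp only [Fin.snoc_castSucc, Fin.snoc_last]
    exact ⟨fun i => Nat.le_of_lt_succ (hp i), by omega⟩
  · intro b _
    exact Fin.snoc_init_self b
  · rintro ⟨p, m⟩ _
    simp [Fin.init_snoc, Fin.snoc_last]
  · intro b _
    rw [Fin.prod_univ_castSucc]
    rfl

lemma mul_finsum_Ptn_succ_prod_natMoebiusWeight {R : Type*} [CommRing R] (x y : R) (n : ℕ) :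
    (x * y - 1) * ∑ᶠ b ∈ Ptn (n + 1), ∏ i, natMoebiusWeight x y (b i) =
      (y - 1) * (x * y - y + 1) ^ n + (x * y - y) * (x * y) * (2 * x * y - y) ^ n := by
  set u := x * y - y
  set w := x * y
  have hterm : ∀ p ∈ Fintype.piFinset (fun _ : Fin n => range 2),
      (x * y - 1) * ((∏ i, natMoebiusWeight x y (p i)) *
        ∑ m ∈ range (n + 1 - ∑ i, p i + 1), natMoebiusWeight x y m) =
      (y - 1) * (u ^ (∑ i, p i) * 1 ^ (n - ∑ i, p i)) +
        u * w * (u ^ (∑ i, p i) * w ^ (n - ∑ i, p i)) := by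
    intro p hp
    have hle := sum_le_of_mem_piFinset_range_two hp
    simp only [Fintype.mem_piFinset, mem_range] at hp
    rw [prod_congr rfl fun i _ => natMoebiusWeight_of_le_one x y (Nat.le_of_lt_succ (hp i)),
      prod_pow_eq_pow_sum, mul_left_comm, mul_sum_range_natMoebiusWeight,
      Nat.sub_add_comm hle, pow_succ]
    ring
  rw [finsum_Ptn_succ_prod, mul_sum, sum_congr rfl hterm, sum_add_distrib, ← mul_sum, ← mul_sum,
    sum_piFinset_range_two_pow_mul_pow, sum_piFinset_range_two_pow_mul_pow]
  ring

end Ptn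

namespace PowerSeries

variable {R : Type*} [CommRing R]

lemma one_sub_C_mul_X_mul_mk_pow (a : R) : (1 - C a * X) * mk (a ^ ·) = 1 := by
  have := congrArg (rescale a) (mk_one_mul_one_sub_eq_one R)
  simpa [rescale_X, rescale_mk, mul_comm] using this

lemma C_mul_mul_eq_of_coeff_succ {F : PowerSeries R} {c α β γ δ : R}
    (h0 : constantCoeff F = 1) (hsucc : ∀ n, c * coeff (n + 1) F = γ * α ^ n + δ * β ^ n) :
    C c * F * ((1 - C α * X) * (1 - C β * X)) =
      C c * ((1 - C α * X) * (1 - C β * X)) +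
        X * (C γ * (1 - C β * X) + C δ * (1 - C α * X)) := by
  have hF : C c * F = C c + X * (C γ * mk (α ^ ·) + C δ * mk (β ^ ·)) := by
    ext (_ | n)
    · simp [h0]
    · simp [coeff_succ_X_mul, hsucc]
  rw [hF]
  linear_combination (X * C γ * (1 - C β * X)) * one_sub_C_mul_X_mul_mk_pow α +
    (X * C δ * (1 - C α * X)) * one_sub_C_mul_X_mul_mk_pow β

end PowerSeries

/-- Let `mu n` be the Möbius function of the finite poset `P_{t_n}` and let
`M_{t_n}(X,Y) = ∑_{a ≤ b in P_{t_n}} mu(a,b) X^{ht(a)} Y^{ht(b)} ∈ ℤ[X,Y]`. Then in the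
ring of formal power series in `s` over `ℤ[X,Y]` one has
`(1 + ∑_{n ≥ 1} M_{t_n}(X,Y) sⁿ)(2XYs - Ys - 1)(XYs - Ys + s - 1) = (XYs - Ys - 1)(XYs - 1)`,
where `1 + ∑_{n ≥ 1} M_{t_n} sⁿ` is the power series with constant coefficient `1` and
`n`-th coefficient `M_{t_n}(X,Y)` for `n ≥ 1`. -/
theorem stmt6
    (mu : (n : ℕ) → (Fin n → ℕ) → (Fin n → ℕ) → ℤ)
    (hrefl : ∀ n : ℕ, ∀ a ∈ Ptn n, mu n a a = 1)
    (hrec : ∀ n : ℕ, ∀ a ∈ Ptn n, ∀ b ∈ Ptn n, a < b →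
      mu n a b = -∑ᶠ e ∈ {e | e ∈ Ptn n ∧ a ≤ e ∧ e < b}, mu n a e) :
    (PowerSeries.mk fun n => if n = 0 then 1 else
        ∑ᶠ a ∈ Ptn n, ∑ᶠ b ∈ {b | b ∈ Ptn n ∧ a ≤ b},
          MvPolynomial.C (mu n a b) * (Xv ^ (∑ i, a i) * Yv ^ (∑ i, b i))) *
      (2 * CX * CY * S - CY * S - 1) * (CX * CY * S - CY * S + S - 1) =
      (CX * CY * S - CY * S - 1) * (CX * CY * S - 1) := by
  set F : PowerSeries (MvPolynomial (Fin 2) ℤ) := PowerSeries.mk fun n => if n = 0 then 1 else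
    ∑ᶠ a ∈ Ptn n, ∑ᶠ b ∈ {b | b ∈ Ptn n ∧ a ≤ b},
      MvPolynomial.C (mu n a b) * (Xv ^ (∑ i, a i) * Yv ^ (∑ i, b i))
  have hc : PowerSeries.C (Xv * Yv - 1) ≠ 0 := fun h => by
    simpa [Xv, Yv] using congrArg (MvPolynomial.constantCoeff ∘ PowerSeries.constantCoeff) h
  have key := PowerSeries.C_mul_mul_eq_of_coeff_succ (F := F) (c := Xv * Yv - 1)
    (α := 2 * Xv * Yv - Yv) (β := Xv * Yv - Yv + 1) (γ := (Xv * Yv - Yv) * (Xv * Yv))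
    (δ := Yv - 1) (by simp [F]) fun n => by
      rw [PowerSeries.coeff_mk, if_neg n.succ_ne_zero]
      simp only [eq_intCast]
      rw [finsum_mu_mul_pow_eq_finsum_prod_natMoebiusWeight _ _ (isLowerSet_Ptn _) (finite_Ptn _)
        (hrefl _) (hrec _), mul_finsum_Ptn_succ_prod_natMoebiusWeight]
      ring
  simp only [CX, CY, S]
  apply mul_left_cancel₀ hc
  simp only [map_sub, map_mul, map_add, map_one, map_ofNat] at key ⊢
  linear_combination key
end

section
/- Fix a real v > 0 and a real s with |s| < 1, and for each integer n ≥ 1 let L_n(v) = ∫_{Q_{t_n}} exp(-v·(x_1 + ⋯ + x_n)) dx with respect to Lebesgue measure on ℝ^n. Then the series ∑_{n ≥ 1} L_n(v) s^n converges, with sum equal to (1/v)·( s/( (e^{-v}/v)·s - s/v + 1 ) + e^{-v} s/( e^{-v} s - 1 ) ); equivalently, the sum equals s/(v - (1 - e^{-v})s) - e^{-v} s/( v (1 - e^{-v} s) ). -/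
open MeasureTheory

/-- The arbor polytope `Q_{t_n} ⊆ ℝ^n`: points `x` with `x i ≥ 0` for all `i`,
`x i ≤ 1` for the first `n - 1` coordinates, and `x 1 + ⋯ + x n ≤ n`. -/
def Qtn (n : ℕ) : Set (Fin n → ℝ) :=
  {x | (∀ i, 0 ≤ x i) ∧ (∀ i : Fin n, (i : ℕ) < n - 1 → x i ≤ 1) ∧ ∑ i, x i ≤ n}

/-- The Laplace transform `L_n(v)` of the volume function of `Q_{t_n}`:
the integral of `exp(-v (x₁ + ⋯ + xₙ))` over `Q_{t_n}` with respect to Lebesgue measure. -/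
noncomputable def Ltn (n : ℕ) (v : ℝ) : ℝ :=
  ∫ x in Qtn n, Real.exp (-v * ∑ i, x i)

/-! Splitting off the last coordinate, `Q_{t_{n+1}}` is the region over the unit cube `[0,1]ⁿ`
lying between `0` and `n + 1 - ∑ yᵢ`. Integrating out the last coordinate leaves
`(e^{-v ∑ yᵢ} - e^{-v(n+1)}) / v`, whose first term factorizes over the cube, so
`L_{n+1}(v) = ((1 - e^{-v}) / v)ⁿ / v - e^{-v(n+1)} / v`. The generating function is therefore a
difference of two geometric series, with ratios `(1 - e^{-v}) s / v` and `e^{-v} s`; both have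
modulus `< 1` because `0 < 1 - e^{-v} < v`. -/

open Real Set

theorem integral_Icc_exp_neg_mul {v : ℝ} (hv : v ≠ 0) {a b : ℝ} (hab : a ≤ b) :
    ∫ t in Icc a b, exp (-v * t) = (exp (-v * a) - exp (-v * b)) / v := by
  have hderiv : ∀ t, HasDerivAt (fun t => exp (-v * t) / -v) (exp (-v * t)) t := fun t =>
    (((hasDerivAt_id t).const_mul (-v)).exp.div_const (-v)).congr_deriv (by simp [field])
  rw [integral_Icc_eq_integral_Ioc, ← intervalIntegral.integral_of_le hab,
    intervalIntegral.integral_eq_sub_of_hasDerivAt (fun t _ => hderiv t)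
      ((by fun_prop : Continuous fun t => exp (-v * t)).intervalIntegrable _ _)]
  ring

theorem setIntegral_Icc_exp_neg_mul_sum {ι : Type*} [Fintype ι] {v : ℝ} (hv : v ≠ 0) :
    ∫ y in Icc (0 : ι → ℝ) 1, exp (-v * ∑ i, y i) = ((1 - exp (-v)) / v) ^ Fintype.card ι := by
  have hprod : ∀ y : ι → ℝ, exp (-v * ∑ i, y i) = ∏ i, exp (-v * y i) := fun y => by
    rw [Finset.mul_sum, exp_sum]
  simp_rw [hprod, ← pi_univ_Icc, volume_pi, Measure.restrict_pi_pi, Pi.zero_apply, Pi.one_apply]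
  rw [integral_fintype_prod_eq_pow (fun t => exp (-v * t)),
    integral_Icc_exp_neg_mul hv zero_le_one]
  simp

theorem setIntegral_fiberwise_Icc {α : Type*} [MeasureSpace α] [SFinite (volume : Measure α)]
    {s : Set α} (hs : MeasurableSet s) {a b : α → ℝ} (ha : Measurable a) (hb : Measurable b)
    {f : ℝ × α → ℝ} (hf : IntegrableOn f {p | p.2 ∈ s ∧ p.1 ∈ Icc (a p.2) (b p.2)}) :
    ∫ p in {p | p.2 ∈ s ∧ p.1 ∈ Icc (a p.2) (b p.2)}, f p =
      ∫ y in s, ∫ t in Icc (a y) (b y), f (t, y) := by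
  set R : Set (ℝ × α) := {p | p.2 ∈ s ∧ p.1 ∈ Icc (a p.2) (b p.2)}
  have hR : MeasurableSet R :=
    (measurable_snd hs).inter ((measurableSet_le (ha.comp measurable_snd) measurable_fst).inter
      (measurableSet_le measurable_fst (hb.comp measurable_snd)))
  have hfiber : ∀ y, ∫ t, R.indicator f (t, y) =
      s.indicator (fun y => ∫ t in Icc (a y) (b y), f (t, y)) y := by
    intro y
    by_cases hy : y ∈ s
    · rw [indicator_of_mem hy, ← integral_indicator measurableSet_Icc]
      congr 1 with t
      simp [R, indicator, hy]
    · simp [R, indicator, hy]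
  rw [← integral_indicator hR, Measure.volume_eq_prod,
    integral_prod_symm _ ((integrable_indicator_iff hR).2 hf)]
  simp_rw [hfiber]
  rw [integral_indicator hs]

theorem snoc_mem_Qtn_succ_iff {n : ℕ} (y : Fin n → ℝ) (t : ℝ) :
    (Fin.snoc y t : Fin (n + 1) → ℝ) ∈ Qtn (n + 1) ↔
      y ∈ Icc 0 1 ∧ t ∈ Icc 0 (n + 1 - ∑ i, y i) := by
  simp only [Qtn, mem_ofPred_eq, Fin.forall_fin_succ', Fin.snoc_castSucc, Fin.snoc_last,
    Fin.sum_univ_castSucc, Fin.val_castSucc, Fin.val_last, Nat.add_sub_cancel, Fin.is_lt,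
    lt_irrefl, false_implies, and_true, forall_const, mem_Icc, Pi.le_def, Pi.zero_apply,
    Pi.one_apply]
  push_cast
  constructor
  · rintro ⟨⟨hy0, ht0⟩, hy1, hsum⟩
    exact ⟨⟨hy0, hy1⟩, ht0, by linarith⟩
  · rintro ⟨⟨hy0, hy1⟩, ht0, hsum⟩
    exact ⟨⟨hy0, ht0⟩, hy1, by linarith⟩

theorem Ltn_succ_eq_setIntegral (n : ℕ) (v : ℝ) :
    Ltn (n + 1) v =
      ∫ p in {p : ℝ × (Fin n → ℝ) | p.2 ∈ Icc 0 1 ∧ p.1 ∈ Icc 0 (n + 1 - ∑ i, p.2 i)},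
        exp (-v * (p.1 + ∑ i, p.2 i)) := by
  have he : ∀ p, (MeasurableEquiv.piFinSuccAbove (fun _ => ℝ) (Fin.last n)).symm p =
      (Fin.snoc p.2 p.1 : Fin (n + 1) → ℝ) := fun p => by
    simp [MeasurableEquiv.piFinSuccAbove_symm_apply, Fin.insertNthEquiv, Fin.insertNth_last']
  have hpre : (MeasurableEquiv.piFinSuccAbove (fun _ => ℝ) (Fin.last n)).symm ⁻¹' Qtn (n + 1) =
      {p | p.2 ∈ Icc 0 1 ∧ p.1 ∈ Icc 0 ((n : ℝ) + 1 - ∑ i, p.2 i)} := by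
    ext p
    simp only [mem_preimage, he, snoc_mem_Qtn_succ_iff, mem_ofPred_eq]
  rw [Ltn.eq_1, ← (volume_preserving_piFinSuccAbove (fun _ => ℝ) (Fin.last n)).symm
    |>.setIntegral_preimage_emb (MeasurableEquiv.measurableEmbedding _), hpre]
  simp only [he, Fin.sum_univ_castSucc, Fin.snoc_castSucc, Fin.snoc_last, add_comm]

theorem Ltn_succ {v : ℝ} (hv : v ≠ 0) (n : ℕ) :
    Ltn (n + 1) v = ((1 - exp (-v)) / v) ^ n / v - exp (-v) ^ (n + 1) / v := by
  have hint : IntegrableOn (fun p : ℝ × (Fin n → ℝ) => exp (-v * (p.1 + ∑ i, p.2 i)))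
      {p | p.2 ∈ Icc 0 1 ∧ p.1 ∈ Icc 0 (n + 1 - ∑ i, p.2 i)} := by
    refine ((by fun_prop : Continuous _).continuousOn.integrableOn_compact
      (isCompact_Icc.prod isCompact_Icc :
        IsCompact (Icc (0 : ℝ) (n + 1) ×ˢ Icc (0 : Fin n → ℝ) 1))).mono_set ?_
    rintro ⟨t, y⟩ ⟨hy, ht0, ht⟩
    have : 0 ≤ ∑ i, y i := Finset.sum_nonneg fun i _ => hy.1 i
    exact ⟨⟨ht0, by linarith⟩, hy⟩
  have hfiber : ∀ y ∈ Icc (0 : Fin n → ℝ) 1,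
      ∫ t in Icc 0 (n + 1 - ∑ i, y i), exp (-v * (t + ∑ i, y i)) =
        (exp (-v * ∑ i, y i) - exp (-v) ^ (n + 1)) / v := by
    intro y hy
    have hsum : ∑ i, y i ≤ n := by
      simpa using Finset.sum_le_sum fun i (_ : i ∈ Finset.univ) => hy.2 i
    simp_rw [mul_add, exp_add]
    rw [integral_mul_const, integral_Icc_exp_neg_mul hv (by linarith), mul_zero, exp_zero,
      div_mul_eq_mul_div, sub_mul, one_mul, ← exp_add, ← exp_nat_mul]
    push_cast
    ring_nf
  rw [Ltn_succ_eq_setIntegral,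
    setIntegral_fiberwise_Icc (measurableSet_Icc (a := (0 : Fin n → ℝ)) (b := 1))
      (measurable_const (a := (0 : ℝ))) (b := fun y => (n : ℝ) + 1 - ∑ i, y i) (by fun_prop) hint,
    setIntegral_congr_fun measurableSet_Icc hfiber, integral_div, integral_sub,
    setIntegral_Icc_exp_neg_mul_sum hv, setIntegral_const]
  · rw [measureReal_def, Real.volume_Icc_pi_toReal zero_le_one]
    simp [sub_div]
  · exact (by fun_prop : Continuous fun y : Fin n → ℝ => exp (-v * ∑ i, y i)).integrableOn_Icc
  · exact continuous_const.integrableOn_Icc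

theorem hasSum_Ltn_succ_mul_pow {v s : ℝ} (hv : v ≠ 0) (h₁ : |(1 - exp (-v)) / v * s| < 1)
    (h₂ : |exp (-v) * s| < 1) :
    HasSum (fun n : ℕ => Ltn (n + 1) v * s ^ (n + 1))
      (s / (v - (1 - exp (-v)) * s) - exp (-v) * s / (v * (1 - exp (-v) * s))) := by
  have hden₁ : v - (1 - exp (-v)) * s ≠ 0 := by
    have : (1 - exp (-v)) / v * s ≠ 1 := (lt_of_le_of_lt (le_abs_self _) h₁).ne
    contrapose! this
    field_simp
    linarith
  have hden₂ : 1 - exp (-v) * s ≠ 0 := sub_ne_zero.2 (lt_of_le_of_lt (le_abs_self _) h₂).ne'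
  have hterm : ∀ n : ℕ, Ltn (n + 1) v * s ^ (n + 1) =
      s / v * ((1 - exp (-v)) / v * s) ^ n - exp (-v) * s / v * (exp (-v) * s) ^ n := by
    intro n
    rw [Ltn_succ hv, mul_pow, mul_pow]
    ring
  have hsum : s / (v - (1 - exp (-v)) * s) - exp (-v) * s / (v * (1 - exp (-v) * s)) =
      s / v * (1 - (1 - exp (-v)) / v * s)⁻¹ - exp (-v) * s / v * (1 - exp (-v) * s)⁻¹ := by
    field_simp
  rw [funext hterm, hsum]
  exact ((hasSum_geometric_of_abs_lt_one h₁).mul_left _).sub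
    ((hasSum_geometric_of_abs_lt_one h₂).mul_left _)

/-- Fix a real `v > 0` and a real `s` with `|s| < 1`. Then the series
`∑_{n ≥ 1} L_n(v) sⁿ` converges, with sum equal to
`(1/v)(s/((e^{-v}/v)s - s/v + 1) + e^{-v}s/(e^{-v}s - 1))`; equivalently, the sum equals
`s/(v - (1 - e^{-v})s) - e^{-v}s/(v(1 - e^{-v}s))`. -/
theorem stmt13 (v s : ℝ) (hv : 0 < v) (hs : |s| < 1) :
    HasSum (fun n : ℕ => Ltn (n + 1) v * s ^ (n + 1))
      ((1 / v) * (s / ((Real.exp (-v) / v) * s - s / v + 1) +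
        Real.exp (-v) * s / (Real.exp (-v) * s - 1))) ∧
    (1 / v) * (s / ((Real.exp (-v) / v) * s - s / v + 1) +
        Real.exp (-v) * s / (Real.exp (-v) * s - 1)) =
      s / (v - (1 - Real.exp (-v)) * s) -
        Real.exp (-v) * s / (v * (1 - Real.exp (-v) * s)) := by
  have hq0 : 0 < exp (-v) := exp_pos _
  have hq1 : exp (-v) < 1 := exp_lt_one_iff.2 (neg_neg_of_pos hv)
  have hqv : 1 - exp (-v) < v := by linarith [add_one_lt_exp (neg_ne_zero.2 hv.ne')]
  have h₁ : |(1 - exp (-v)) / v * s| < 1 := by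
    rw [abs_mul, abs_of_pos (div_pos (by linarith) hv)]
    calc (1 - exp (-v)) / v * |s| ≤ (1 - exp (-v)) / v :=
          mul_le_of_le_one_right (by positivity) hs.le
      _ < 1 := (div_lt_one hv).2 hqv
  have h₂ : |exp (-v) * s| < 1 := by
    rw [abs_mul, abs_of_pos hq0]
    nlinarith [abs_nonneg s]
  have hs_bounds := abs_lt.1 hs
  have hden₁ : v - (1 - exp (-v)) * s ≠ 0 := by nlinarith
  have hden₂ : 1 - exp (-v) * s ≠ 0 := by nlinarith
  have hclosed :
      (1 / v) * (s / ((exp (-v) / v) * s - s / v + 1) + exp (-v) * s / (exp (-v) * s - 1)) =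
      s / (v - (1 - exp (-v)) * s) - exp (-v) * s / (v * (1 - exp (-v) * s)) := by
    rw [show exp (-v) / v * s - s / v + 1 = (v - (1 - exp (-v)) * s) / v by field_simp; ring,
      ← neg_sub 1, div_neg]
    field_simp
    ring
  exact ⟨hclosed ▸ hasSum_Ltn_succ_mul_pow hv.ne' h₁ h₂, hclosed⟩
end
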